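/- Let N ≥ 1, let G be a closed subgroup of U_N, let I ⊆ {1,…,N} be nonempty, let e = (e_1,…,e_l) and f = (f_1,…,f_k) be words with letters in {∘,•}, and let T be a complex matrix with rows indexed by {1,…,N}^l and columns indexed by {1,…,N}^k such that T g^{⊗f} = g^{⊗e} T for every g ∈ G. Then for every point x in the orbit G·ξ_I = {g ξ_I : g ∈ G} ⊆ ℂ^N one has Σ_{i∈{1,…,N}^l} Σ_{j∈{1,…,N}^k} T_{i,j} · (∏_{a=1}^l x_{i_a}^{ē_a}) · (∏_{b=1}^k conj(x_{j_b}^{f̄_b})) = |I|^{-(k+l)/2} Σ_{r∈I^l} Σ_{s∈I^k} T_{r,s}, where for a scalar x, x^∘ = x and x^• = conj(x), and ē, f̄ are obtained from e, f by exchanging ∘ and •. -/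

import Mathlib

/-!
For `x = g ξ_I`, both decorated products of coordinates of `x` are coordinates of
`g^{⊗ē} ξ_I^{⊗l}` and `g^{⊗f} ξ_I^{⊗k}` (no conjugation survives on `ξ_I`, which is real),
so the left-hand side is the bilinear form `(g^{⊗ē} ξ_I^{⊗l})ᵀ T (g^{⊗f} ξ_I^{⊗k})`.
Transposing turns `g^{⊗ē}` into `(gᴴ)^{⊗e}`, and as `g ↦ g^{⊗e}` is multiplicative and `g` is
unitary, the intertwining relation gives `(gᴴ)^{⊗e} T g^{⊗f} = T`. What remains is
`(ξ_I^{⊗l})ᵀ T ξ_I^{⊗k}`, the sum of `T` over `I^l × I^k` scaled by `|I|^{-(k+l)/2}`.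
-/

open Matrix

/-- `x^∘ = x` and `x^• = conj x`, for a scalar `x` (here `true` encodes `•`). -/
noncomputable def dec (b : Bool) (z : ℂ) : ℂ := if b then (starRingEnd ℂ) z else z

/-- The decorated tensor power `g^{⊗e}` of a matrix `g ∈ M_N(ℂ)`, for a word `e` with letters
in `{∘,•}` (here `true` encodes `•`): the matrix with entries `∏_a g_{i_a j_a}^{e_a}`. -/
noncomputable def decPow {N k : ℕ} (e : Fin k → Bool) (g : Matrix (Fin N) (Fin N) ℂ) :
    Matrix (Fin k → Fin N) (Fin k → Fin N) ℂ :=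
  Matrix.of fun i j => ∏ a, dec (e a) (g (i a) (j a))

/-- The unit vector `ξ_I ∈ ℂ^N`, with coordinates `1/√|I|` on `I` and `0` elsewhere. -/
noncomputable def xiI (N : ℕ) (I : Finset (Fin N)) : Fin N → ℂ :=
  fun i => if i ∈ I then ((1 / Real.sqrt I.card : ℝ) : ℂ) else 0

lemma dec_mul (b : Bool) (z w : ℂ) : dec b (z * w) = dec b z * dec b w := by
  cases b <;> simp [dec]

lemma dec_sum {α : Type*} (b : Bool) (s : Finset α) (h : α → ℂ) :
    dec b (∑ x ∈ s, h x) = ∑ x ∈ s, dec b (h x) := by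
  cases b <;> simp [dec]

lemma star_dec (b : Bool) (z : ℂ) : (starRingEnd ℂ) (dec b z) = dec (!b) z := by
  cases b <;> simp [dec]

lemma dec_star (b : Bool) (z : ℂ) : dec b ((starRingEnd ℂ) z) = dec (!b) z := by
  cases b <;> simp [dec]

lemma dec_of_conj_eq {b : Bool} {z : ℂ} (hz : (starRingEnd ℂ) z = z) : dec b z = z := by
  cases b <;> simp [dec, hz]

section decPow

variable {N k : ℕ} (w : Fin k → Bool)

lemma decPow_mul (A B : Matrix (Fin N) (Fin N) ℂ) :
    decPow w (A * B) = decPow w A * decPow w B := by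
  ext i j
  simp only [decPow, mul_apply, of_apply, dec_sum, dec_mul, Finset.prod_univ_sum,
    Fintype.piFinset_univ, Finset.prod_mul_distrib]

lemma decPow_one : decPow (N := N) w 1 = 1 := by
  ext i j
  by_cases hij : i = j
  · subst hij
    simp [decPow, dec]
  · obtain ⟨a, ha⟩ : ∃ a, i a ≠ j a := Function.ne_iff.mp hij
    rw [one_apply_ne hij]
    exact Finset.prod_eq_zero (Finset.mem_univ a) (by simp [one_apply_ne ha, dec])

lemma transpose_decPow_not (g : Matrix (Fin N) (Fin N) ℂ) :
    (decPow (fun a => !w a) g)ᵀ = decPow w (star g) := by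
  ext i j
  simp only [decPow, transpose_apply, of_apply, star_apply, RCLike.star_def, dec_star]

/-- `(g^{⊗ē})ᵀ = (gᴴ)^{⊗e}` is a left inverse of `g^{⊗e}` because `g` is unitary. -/
lemma transpose_decPow_not_mul_mul_decPow {e : Fin k → Bool} {l : ℕ} {f : Fin l → Bool}
    {g : Matrix (Fin N) (Fin N) ℂ} (hg : g ∈ unitaryGroup (Fin N) ℂ)
    {T : Matrix (Fin k → Fin N) (Fin l → Fin N) ℂ} (hT : T * decPow f g = decPow e g * T) :
    (decPow (fun a => !e a) g)ᵀ * T * decPow f g = T := by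
  rw [transpose_decPow_not, Matrix.mul_assoc, hT, ← Matrix.mul_assoc, ← decPow_mul,
    mem_unitaryGroup_iff'.mp hg, decPow_one, Matrix.one_mul]

end decPow

def tensorPow {N : ℕ} (m : ℕ) (v : Fin N → ℂ) : (Fin m → Fin N) → ℂ :=
  fun r => ∏ a, v (r a)

lemma prod_dec_mulVec {N m : ℕ} (w : Fin m → Bool) (g : Matrix (Fin N) (Fin N) ℂ)
    {v : Fin N → ℂ} (hv : ∀ p, (starRingEnd ℂ) (v p) = v p) (i : Fin m → Fin N) :
    ∏ a, dec (w a) ((g *ᵥ v) (i a)) = (decPow w g *ᵥ tensorPow m v) i := by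
  simp only [mulVec, dotProduct, dec_sum, dec_mul, dec_of_conj_eq (hv _), Finset.prod_univ_sum,
    Fintype.piFinset_univ, Finset.prod_mul_distrib, decPow, tensorPow, of_apply]

lemma sum_sum_mul_mul_eq_dotProduct_mulVec {m n R : Type*} [Fintype m] [Fintype n] [CommSemiring R]
    (T : Matrix m n R) (u : m → R) (v : n → R) :
    ∑ i, ∑ j, T i j * u i * v j = u ⬝ᵥ (T *ᵥ v) := by
  simp only [dotProduct, mulVec, Finset.mul_sum]
  exact Finset.sum_congr rfl fun i _ => Finset.sum_congr rfl fun j _ => by ring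

lemma mulVec_dotProduct_mulVec {m n R : Type*} [Fintype m] [Fintype n] [CommSemiring R]
    (P : Matrix m m R) (M : Matrix m n R) (u : m → R) (v : n → R) :
    (P *ᵥ u) ⬝ᵥ (M *ᵥ v) = u ⬝ᵥ ((Pᵀ * M) *ᵥ v) := by
  rw [← vecMul_transpose, ← dotProduct_mulVec, mulVec_mulVec]

lemma conj_xiI {N : ℕ} (I : Finset (Fin N)) (p : Fin N) :
    (starRingEnd ℂ) (xiI N I p) = xiI N I p := by
  unfold xiI
  split_ifs <;> simp

lemma tensorPow_xiI {N m : ℕ} (I : Finset (Fin N)) (r : Fin m → Fin N) :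
    tensorPow m (xiI N I) r = if ∀ a, r a ∈ I then ((1 / √I.card : ℝ) : ℂ) ^ m else 0 := by
  simp only [tensorPow, xiI, Fintype.prod_ite_zero, Finset.prod_const, Finset.card_univ,
    Fintype.card_fin]

lemma sum_tensorPow_xiI_mul {N m : ℕ} (I : Finset (Fin N)) (h : (Fin m → Fin N) → ℂ) :
    ∑ r, tensorPow m (xiI N I) r * h r =
      ((1 / √I.card : ℝ) : ℂ) ^ m * ∑ r : Fin m → I, h (fun a => r a) := by
  classical
  simp_rw [tensorPow_xiI, ite_mul, zero_mul]
  rw [← Finset.sum_filter, ← Finset.mul_sum,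
    Finset.sum_subtype _ fun _ => Finset.mem_filter_univ _]
  exact congrArg _ (Fintype.sum_equiv Equiv.subtypePiEquivPi _ _ fun _ => rfl)

lemma Real.sqrt_pow_of_nonneg {x : ℝ} (hx : 0 ≤ x) (n : ℕ) : √(x ^ n) = √x ^ n := by
  induction n with
  | zero => simp
  | succ n ih => rw [pow_succ, Real.sqrt_mul (pow_nonneg hx n), ih, pow_succ]

lemma tensorPow_xiI_dotProduct_mulVec {N l k : ℕ} (I : Finset (Fin N))
    (T : Matrix (Fin l → Fin N) (Fin k → Fin N) ℂ) :
    tensorPow l (xiI N I) ⬝ᵥ (T *ᵥ tensorPow k (xiI N I)) =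
      ((1 / √((I.card : ℝ) ^ (k + l)) : ℝ) : ℂ) *
        ∑ r : Fin l → I, ∑ s : Fin k → I, T (fun a => r a) (fun b => s b) := by
  simp only [dotProduct, mulVec, mul_comm (T _ _)]
  simp only [sum_tensorPow_xiI_mul]
  rw [← Finset.mul_sum, ← mul_assoc, ← pow_add, Real.sqrt_pow_of_nonneg I.card.cast_nonneg,
    ← _root_.one_div_pow, Complex.ofReal_pow, add_comm]

theorem stmt9_general (N : ℕ) (G : Subgroup (Matrix.unitaryGroup (Fin N) ℂ))
    (I : Finset (Fin N))
    (l k : ℕ) (e : Fin l → Bool) (f : Fin k → Bool)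
    (T : Matrix (Fin l → Fin N) (Fin k → Fin N) ℂ)
    (hT : ∀ g ∈ G, T * decPow f ((g : Matrix.unitaryGroup (Fin N) ℂ) : Matrix (Fin N) (Fin N) ℂ)
      = decPow e ((g : Matrix.unitaryGroup (Fin N) ℂ) : Matrix (Fin N) (Fin N) ℂ) * T) :
    ∀ x : Fin N → ℂ, (∃ g ∈ G, ((g : Matrix (Fin N) (Fin N) ℂ)) *ᵥ xiI N I = x) →
      ∑ i : Fin l → Fin N, ∑ j : Fin k → Fin N,
          T i j * (∏ a, dec (!(e a)) (x (i a))) *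
            ∏ b, (starRingEnd ℂ) (dec (!(f b)) (x (j b))) =
        ((1 / Real.sqrt ((I.card : ℝ) ^ (k + l)) : ℝ) : ℂ) *
          ∑ r : Fin l → {y // y ∈ I}, ∑ s : Fin k → {y // y ∈ I},
            T (fun a => (r a : Fin N)) (fun b => (s b : Fin N)) := by
  rintro x ⟨g, hg, rfl⟩
  set P := decPow (fun a => !e a) (g : Matrix (Fin N) (Fin N) ℂ)
  set Q := decPow f (g : Matrix (Fin N) (Fin N) ℂ)
  set ξl := tensorPow l (xiI N I)
  set ξk := tensorPow k (xiI N I)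
  calc _ = ∑ i, ∑ j, T i j * (P *ᵥ ξl) i * (Q *ᵥ ξk) j := by
        simp only [star_dec, Bool.not_not, prod_dec_mulVec _ _ (conj_xiI I)]; rfl
    _ = ξl ⬝ᵥ ((Pᵀ * T * Q) *ᵥ ξk) := by
        rw [sum_sum_mul_mul_eq_dotProduct_mulVec, mulVec_mulVec, mulVec_dotProduct_mulVec,
          Matrix.mul_assoc]
    _ = ξl ⬝ᵥ (T *ᵥ ξk) := by rw [transpose_decPow_not_mul_mul_decPow g.2 (hT g hg)]
    _ = _ := tensorPow_xiI_dotProduct_mulVec I T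

/-- Classical case of Theorem 2.5: for any intertwiner `T g^{⊗f} = g^{⊗e} T` (`g ∈ G`), every
point `x` of the orbit `G·ξ_I` satisfies
`Σ_i Σ_j T_{i,j} (∏_a x_{i_a}^{ē_a}) (∏_b conj(x_{j_b}^{f̄_b})) = |I|^{-(k+l)/2} Σ_{r∈I^l} Σ_{s∈I^k} T_{r,s}`,
where `ē`, `f̄` are obtained from `e`, `f` by exchanging `∘` and `•`. -/
theorem stmt9 (N : ℕ) (hN : 1 ≤ N) (G : Subgroup (Matrix.unitaryGroup (Fin N) ℂ))
    (hG : IsClosed (G : Set (Matrix.unitaryGroup (Fin N) ℂ)))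
    (I : Finset (Fin N)) (hI : I.Nonempty)
    (l k : ℕ) (e : Fin l → Bool) (f : Fin k → Bool)
    (T : Matrix (Fin l → Fin N) (Fin k → Fin N) ℂ)
    (hT : ∀ g ∈ G, T * decPow f ((g : Matrix.unitaryGroup (Fin N) ℂ) : Matrix (Fin N) (Fin N) ℂ)
      = decPow e ((g : Matrix.unitaryGroup (Fin N) ℂ) : Matrix (Fin N) (Fin N) ℂ) * T) :
    ∀ x : Fin N → ℂ, (∃ g ∈ G, ((g : Matrix (Fin N) (Fin N) ℂ)) *ᵥ xiI N I = x) →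
      ∑ i : Fin l → Fin N, ∑ j : Fin k → Fin N,
          T i j * (∏ a, dec (!(e a)) (x (i a))) *
            ∏ b, (starRingEnd ℂ) (dec (!(f b)) (x (j b))) =
        ((1 / Real.sqrt ((I.card : ℝ) ^ (k + l)) : ℝ) : ℂ) *
          ∑ r : Fin l → {y // y ∈ I}, ∑ s : Fin k → {y // y ∈ I},
            T (fun a => (r a : Fin N)) (fun b => (s b : Fin N)) :=
  stmt9_general N G I l k e f T hT
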